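/- Let M and M' be R-modules. Every natural transformation f from the functor S ↦ Hom_R(M,S) to the functor S ↦ M' ⊗_R S, with each component S-linear, arises from a unique element of M ⊗_R M': explicitly, an element ∑_i m_i ⊗ m'_i determines the transformation w ↦ ∑_i w(m_i)·m'_i, and this assignment M ⊗_R M' → Hom_𝒦(ℳ*, ℳ') is a bijection. -/

import Mathlib

/-!
An `R`-linear map `w : M → S` is not an algebra map, but `w ε : M → S[ε]` squares to zero and
so extends to an `R`-algebra map `φ : R ⊕ M → S[ε]` on the trivial square-zero extension, with
`φ ∘ inr = ε • w`. Naturality of `f` along `φ` and `S[ε]`-linearity of `f` at `ε` then give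
`f w = (w ⊗ 1) x` for `x = (snd ⊗ 1) (f inr)`; and `x` is unique because `inr ⊗ 1` has the
left inverse `snd ⊗ 1`.
-/

open TensorProduct TrivSqZeroExt DualNumber LinearMap

section TrivSqZeroExt

variable {R : Type*} [CommSemiring R] {M : Type*} [AddCommMonoid M] [Module R M]

theorem TrivSqZeroExt.sndHom_comp_inrHom : sndHom R M ∘ₗ inrHom R M = LinearMap.id :=
  LinearMap.ext (snd_inr R)

theorem TrivSqZeroExt.rTensor_inrHom_injective (N : Type*) [AddCommMonoid N] [Module R N] :
    Function.Injective (rTensor N (inrHom R M)) :=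
  Function.LeftInverse.injective (g := rTensor N (sndHom R M)) fun x => by
    rw [← rTensor_comp_apply, sndHom_comp_inrHom, rTensor_id_apply]

variable [Module Rᵐᵒᵖ M] [IsCentralScalar R M] {S : Type*} [CommSemiring S] [Algebra R S]

/-- `r + m ↦ r + w(m) ε`. -/
noncomputable def TrivSqZeroExt.toDualNumber (w : M →ₗ[R] S) : TrivSqZeroExt R M →ₐ[R] S[ε] :=
  liftEquivOfComm ⟨(inrHom S S).restrictScalars R ∘ₗ w, fun _ _ => inr_mul_inr _ _ _⟩

theorem TrivSqZeroExt.toDualNumber_comp_inrHom (w : M →ₗ[R] S) :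
    (toDualNumber w).toLinearMap ∘ₗ inrHom R M = (inrHom S S).restrictScalars R ∘ₗ w :=
  LinearMap.ext fun m => by simp [toDualNumber]

theorem TrivSqZeroExt.sndHom_comp_toDualNumber (w : M →ₗ[R] S) :
    (sndHom S S).restrictScalars R ∘ₗ (toDualNumber w).toLinearMap = w ∘ₗ sndHom R M :=
  LinearMap.ext fun x => by simp [toDualNumber, lift_def, algebraMap_eq_inl']

end TrivSqZeroExt

section DualNumber

variable {R : Type*} [CommSemiring R] {S : Type*} [CommSemiring S] [Algebra R S]

theorem DualNumber.eps_mul_inl (s : S) : (ε : S[ε]) * inl s = inr s := by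
  rw [eps, inr_mul_inl, op_smul_eq_mul, one_mul]

theorem DualNumber.eps_smul_inlAlgHom_comp {M : Type*} [AddCommMonoid M] [Module R M]
    (w : M →ₗ[R] S) :
    (ε : S[ε]) • ((inlAlgHom R S S).toLinearMap ∘ₗ w) = (inrHom S S).restrictScalars R ∘ₗ w :=
  LinearMap.ext fun m => eps_mul_inl (w m)

theorem DualNumber.rTensor_sndHom_eps_smul_rTensor_inlAlgHom (N : Type*) [AddCommMonoid N]
    [Module R N] (u : S ⊗[R] N) :
    rTensor N ((sndHom S S).restrictScalars R)
      ((ε : S[ε]) • rTensor N (inlAlgHom R S S).toLinearMap u) = u := by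
  induction u using TensorProduct.induction_on with
  | zero => simp only [map_zero, smul_zero]
  | tmul s n =>
    rw [rTensor_tmul, smul_tmul', smul_eq_mul, rTensor_tmul, AlgHom.toLinearMap_apply,
      inlAlgHom_apply, eps_mul_inl]
    rfl
  | add u v hu hv => rw [map_add, smul_add, map_add, hu, hv]

end DualNumber

section NaturalTransformation

variable {R : Type} [CommRing R] {M : Type} [AddCommGroup M] [Module R M]
  {M' : Type} [AddCommMonoid M'] [Module R M']

def IsNatural (f : ∀ (S : Type) [CommRing S] [Algebra R S], (M →ₗ[R] S) →ₗ[S] S ⊗[R] M') :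
    Prop :=
  ∀ (S S' : Type) [CommRing S] [Algebra R S] [CommRing S'] [Algebra R S'] (φ : S →ₐ[R] S')
    (w : M →ₗ[R] S), f S' (φ.toLinearMap ∘ₗ w) = rTensor M' φ.toLinearMap (f S w)

theorem IsNatural.apply_eq_rTensor [Module Rᵐᵒᵖ M] [IsCentralScalar R M]
    {f : ∀ (S : Type) [CommRing S] [Algebra R S], (M →ₗ[R] S) →ₗ[S] S ⊗[R] M'}
    (hf : IsNatural f) {S : Type} [CommRing S] [Algebra R S] (w : M →ₗ[R] S) :
    f S w = rTensor M' w (rTensor M' (sndHom R M) (f (TrivSqZeroExt R M) (inrHom R M))) := by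
  have key := hf _ _ (toDualNumber w) (inrHom R M)
  rw [toDualNumber_comp_inrHom, ← eps_smul_inlAlgHom_comp, map_smul,
    hf _ _ (inlAlgHom R S S) w] at key
  calc f S w
      = rTensor M' ((sndHom S S).restrictScalars R)
          ((ε : S[ε]) • rTensor M' (inlAlgHom R S S).toLinearMap (f S w)) :=
        (rTensor_sndHom_eps_smul_rTensor_inlAlgHom M' _).symm
    _ = rTensor M' ((sndHom S S).restrictScalars R ∘ₗ (toDualNumber w).toLinearMap)
          (f (TrivSqZeroExt R M) (inrHom R M)) := by rw [key, rTensor_comp_apply]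
    _ = _ := by rw [sndHom_comp_toDualNumber, rTensor_comp_apply]

end NaturalTransformation

/-- `Hom_𝒦(ℳ*, ℳ') = M ⊗_R M'`.  Every natural transformation `f` from the
module scheme `S ↦ Hom_R(M, S)` to the quasi-coherent module `S ↦ S ⊗_R M'` (with
`S`-linear components) arises from a unique element `x ∈ M ⊗_R M'`, via
`w ↦ (rTensor M' w) x`, i.e. `∑ m_i ⊗ m'_i` acts by `w ↦ ∑ w(m_i) · m'_i`. -/
theorem statement3 (R : Type) [CommRing R] (M : Type) [AddCommGroup M] [Module R M]
    (M' : Type) [AddCommGroup M'] [Module R M']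
    (f : {f : ∀ (S : Type) [CommRing S] [Algebra R S], (M →ₗ[R] S) →ₗ[S] S ⊗[R] M' //
        ∀ (S S' : Type) [CommRing S] [Algebra R S] [CommRing S'] [Algebra R S']
          (φ : S →ₐ[R] S') (w : M →ₗ[R] S),
          f S' (φ.toLinearMap ∘ₗ w) = LinearMap.rTensor M' φ.toLinearMap (f S w)}) :
    ∃! x : M ⊗[R] M',
      ∀ (S : Type) [CommRing S] [Algebra R S] (w : M →ₗ[R] S),
        f.1 S w = LinearMap.rTensor M' w x := by
  -- the symmetric bimodule structure making `TrivSqZeroExt R M` a commutative `R`-algebra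
  let _ : Module Rᵐᵒᵖ M := Module.compHom M ((RingHom.id R).fromOpposite mul_comm)
  have _ : IsCentralScalar R M := ⟨fun _ _ => rfl⟩
  have hf : IsNatural f.1 := f.2
  refine ⟨_, fun S _ _ w => hf.apply_eq_rTensor w, fun x hx => ?_⟩
  apply rTensor_inrHom_injective M'
  rw [← hx, ← hf.apply_eq_rTensor]
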